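/- arXiv:2502.19505 — 3 statements merged into one kernel-verified Lean document; each statement's English description precedes it below -/
import Mathlib

section
/- Fix k ≥ 2, a ∈ ℕ, and δ = (δ₁,...,δ_k) ∈ {0,1}^k with a - |δ| a nonnegative even integer, where |δ| = Σδᵢ. The number of weakly increasing sequences of length a with entries in {1,...,k} such that the entry 1 occurs at most once and, for each i, the number of occurrences of i is congruent to δᵢ mod 2, equals the binomial coefficient C((a-|δ|)/2 + k - 2, k - 2). -/
/-!
A weakly increasing sequence is determined by its multiplicities `m₁, …, m_k`, and every vector
of multiplicities with sum `a` occurs. The parity conditions together with `m₁ ≤ 1` force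
`m₁ = δ₁` and `mᵢ = δᵢ + 2 cᵢ` for `i ≥ 2`, so the sequences correspond to vectors
`(c₂, …, c_k)` of natural numbers with sum `(a - |δ|) / 2`, which stars and bars counts.
-/

open Finset

section MonotoneTuples

variable {α : Type*} {n : ℕ}

theorem Fin.card_filter_apply_eq_count_ofFn [DecidableEq α] (f : Fin n → α) (x : α) :
    #{t | f t = x} = (List.ofFn f).count x := by
  rw [← Multiset.coe_count, ← Fin.univ_val_map, Multiset.count_map, ← Finset.filter_val,
    Finset.card_val]
  simp only [eq_comm]

variable [LinearOrder α]

theorem Monotone.eq_of_forall_card_filter_eq {f g : Fin n → α} (hf : Monotone f)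
    (hg : Monotone g) (h : ∀ x, #{t | f t = x} = #{t | g t = x}) : f = g := by
  refine List.ofFn_injective ((List.perm_iff_count.2 fun x => ?_).eq_of_sortedLE
    hf.sortedLE_ofFn hg.sortedLE_ofFn)
  simpa only [Fin.card_filter_apply_eq_count_ofFn] using h x

theorem Multiset.exists_monotone_card_filter_eq_count (s : Multiset α)
    (hs : Multiset.card s = n) :
    ∃ f : Fin n → α, Monotone f ∧ ∀ x, #{t | f t = x} = s.count x := by
  set l := s.sort (· ≤ ·)
  have hl : l.length = n := by rw [Multiset.length_sort, hs]
  have hofFn : List.ofFn (fun t : Fin n => l[t.1]) = l :=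
    List.ext_getElem (by simp [hl]) fun i _ _ => by simp
  refine ⟨fun t => l[t.1], ?_, fun x => ?_⟩
  · rw [← List.sortedLE_ofFn_iff, hofFn, List.sortedLE_iff_pairwise]
    exact s.pairwise_sort _
  · rw [Fin.card_filter_apply_eq_count_ofFn, hofFn, ← Multiset.coe_count, Multiset.sort_eq]

end MonotoneTuples

def weight (k : ℕ) {a : ℕ} (w : Fin a → ℕ) (i : Fin k) : ℕ := #{t | w t = i + 1}

section Weight

variable {k a : ℕ} {w : Fin a → ℕ}

theorem sum_weight (hw : ∀ t, 1 ≤ w t ∧ w t ≤ k) : ∑ i, weight k w i = a := by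
  have hlt (t : Fin a) : w t - 1 < k := by have := hw t; omega
  have hfib := card_eq_sum_card_fiberwise (s := univ) (t := univ)
    (f := fun t => (⟨w t - 1, hlt t⟩ : Fin k)) fun _ _ => mem_univ _
  rw [card_univ, Fintype.card_fin] at hfib
  refine (Finset.sum_congr rfl fun i _ => congrArg card <| filter_congr fun t _ => ?_).trans
    hfib.symm
  have := hw t
  simp only [Fin.ext_iff]
  omega

theorem eq_of_weight_eq {w' : Fin a → ℕ} (hw : Monotone w) (hw' : Monotone w')
    (hr : ∀ t, 1 ≤ w t ∧ w t ≤ k) (hr' : ∀ t, 1 ≤ w' t ∧ w' t ≤ k)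
    (h : weight k w = weight k w') : w = w' := by
  refine hw.eq_of_forall_card_filter_eq hw' fun x => ?_
  by_cases hx : 1 ≤ x ∧ x ≤ k
  · obtain ⟨i, rfl⟩ : ∃ i : Fin k, x = i + 1 := ⟨⟨x - 1, by omega⟩, by simp; omega⟩
    exact congrFun h i
  · have hempty {v : Fin a → ℕ} (hv : ∀ t, 1 ≤ v t ∧ v t ≤ k) : #{t | v t = x} = 0 :=
      card_eq_zero.2 <| filter_eq_empty_iff.2 fun t _ hvt => hx (hvt ▸ hv t)
    rw [hempty hr, hempty hr']

theorem exists_monotone_weight_eq {m : Fin k → ℕ} (hm : ∑ i, m i = a) :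
    ∃ w : Fin a → ℕ, Monotone w ∧ (∀ t, 1 ≤ w t ∧ w t ≤ k) ∧ weight k w = m := by
  set s : Multiset ℕ := ∑ i, m i • {(i : ℕ) + 1}
  have hcount (i : Fin k) : s.count ((i : ℕ) + 1) = m i := by
    simp [s, Multiset.count_sum', Multiset.count_singleton, Fin.val_eq_val]
  obtain ⟨w, hw, hws⟩ := s.exists_monotone_card_filter_eq_count (n := a) (by simp [s, hm])
  refine ⟨w, hw, fun t => ?_, funext fun i => (hws _).trans (hcount i)⟩
  have hmem : w t ∈ s := Multiset.count_pos.1 <| by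
    rw [← hws]; exact card_pos.2 ⟨t, by simp⟩
  obtain ⟨i, -, hi⟩ := Multiset.mem_sum.1 hmem
  rw [Multiset.mem_singleton.1 (Multiset.mem_of_mem_nsmul hi)]
  omega

theorem card_monotone_eq_card_weight (P : (Fin k → ℕ) → Prop) :
    Nat.card {w : Fin a → ℕ // Monotone w ∧ (∀ t, 1 ≤ w t ∧ w t ≤ k) ∧ P (weight k w)} =
      Nat.card {m : Fin k → ℕ // ∑ i, m i = a ∧ P m} := by
  refine Nat.card_eq_of_bijective (fun w => ⟨weight k w.1, sum_weight w.2.2.1, w.2.2.2⟩)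
    ⟨fun w w' h => Subtype.ext ?_, fun m => ?_⟩
  · exact eq_of_weight_eq w.2.1 w'.2.1 w.2.2.1 w'.2.2.1 (congrArg Subtype.val h)
  · obtain ⟨w, hw, hr, hwm⟩ := exists_monotone_weight_eq m.2.1
    exact ⟨⟨w, hw, hr, hwm ▸ m.2.2⟩, Subtype.ext hwm⟩

end Weight

section Parity

variable {k : ℕ} {δ : Fin (k + 1) → ℕ}

theorem sum_add_two_mul_cons (c : Fin k → ℕ) :
    ∑ i, (δ i + 2 * (Fin.cons 0 c : Fin (k + 1) → ℕ) i) = ∑ i, δ i + 2 * ∑ j, c j := by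
  rw [sum_add_distrib, ← mul_sum, Fin.sum_cons, zero_add]

theorem add_two_mul_cons_half_succ (hδ : ∀ i, δ i ≤ 1) {m : Fin (k + 1) → ℕ} (h0 : m 0 ≤ 1)
    (hm : ∀ i, m i % 2 = δ i) :
    (fun i => δ i + 2 * (Fin.cons 0 (fun j => m j.succ / 2) : Fin (k + 1) → ℕ) i) = m := by
  funext i
  have := hm i
  have := hδ i
  cases i using Fin.cases <;> simp only [Fin.cons_zero, Fin.cons_succ] <;> omega

theorem card_weight_parity_eq_card_sum_eq (hδ : ∀ i, δ i ≤ 1) (N : ℕ) :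
    Nat.card {m : Fin (k + 1) → ℕ //
        ∑ i, m i = ∑ i, δ i + 2 * N ∧ m 0 ≤ 1 ∧ ∀ i, m i % 2 = δ i} =
      Nat.card {c : Fin k → ℕ // ∑ j, c j = N} := by
  refine Nat.card_congr
    { toFun := fun m => ⟨fun j => m.1 j.succ / 2, ?_⟩
      invFun := fun c => ⟨fun i => δ i + 2 * (Fin.cons 0 c.1 : Fin (k + 1) → ℕ) i,
        by rw [sum_add_two_mul_cons, c.2], by simp [hδ 0],
        fun i => by have := hδ i; beta_reduce; omega⟩
      left_inv := fun m => Subtype.ext (add_two_mul_cons_half_succ hδ m.2.2.1 m.2.2.2)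
      right_inv := fun c => Subtype.ext <| funext fun j => ?_ }
  · have h := sum_add_two_mul_cons (δ := δ) fun j => m.1 j.succ / 2
    rw [add_two_mul_cons_half_succ hδ m.2.2.1 m.2.2.2, m.2.1] at h
    beta_reduce at h ⊢
    omega
  · have := hδ j.succ
    simp only [Fin.cons_succ]
    omega

end Parity

theorem card_tuple_sum_eq_choose (r n : ℕ) :
    Nat.card {c : Fin (r + 1) → ℕ // ∑ j, c j = n} = (n + r).choose r := by
  rw [← Nat.card_congr (Sym.equivNatSumOfFintype (Fin (r + 1)) n), Nat.card_eq_fintype_card,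
    Sym.card_sym_eq_choose, Fintype.card_fin, Nat.add_right_comm, Nat.add_sub_cancel,
    Nat.add_comm r, Nat.choose_symm_add]

/-- One-row `O_k` branching count.  Fix `k ≥ 2`, `a ∈ ℕ`, and `δ ∈ {0,1}^k` with `a - |δ|` a
nonnegative even integer, where `|δ| = Σ δᵢ`.  The number of weakly increasing sequences of
length `a` with entries in `{1,…,k}` such that the entry `1` occurs at most once and, for each
`i`, the number of occurrences of `i` is congruent to `δᵢ mod 2`, equals
`C((a-|δ|)/2 + k - 2, k - 2)`. -/
theorem one_row_ok_branching (k a : ℕ) (hk : 2 ≤ k)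
    (δ : Fin k → ℕ) (hδ : ∀ i, δ i ≤ 1)
    (hle : ∑ i, δ i ≤ a) (heven : 2 ∣ (a - ∑ i, δ i)) :
    Nat.card {w : Fin a → ℕ //
      Monotone w ∧
      (∀ t, 1 ≤ w t ∧ w t ≤ k) ∧
      (Finset.univ.filter (fun t => w t = 1)).card ≤ 1 ∧
      (∀ i : Fin k,
        (Finset.univ.filter (fun t => w t = (i : ℕ) + 1)).card % 2 = δ i)}
    = ((a - ∑ i, δ i) / 2 + k - 2).choose (k - 2) := by
  obtain ⟨k, rfl⟩ : ∃ k', k = k' + 2 := ⟨k - 2, by omega⟩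
  obtain ⟨N, rfl⟩ : ∃ N, a = ∑ i, δ i + 2 * N := ⟨(a - ∑ i, δ i) / 2, by omega⟩
  have hN : (∑ i, δ i + 2 * N - ∑ i, δ i) / 2 + (k + 2) - 2 = N + k := by omega
  rw [hN, Nat.add_sub_cancel, ← card_tuple_sum_eq_choose, ← card_weight_parity_eq_card_sum_eq hδ]
  exact card_monotone_eq_card_weight fun m => m 0 ≤ 1 ∧ ∀ i, m i % 2 = δ i
end

section
/- Fix k ≥ 2, b, c ∈ ℕ with a := b + c, and δ ∈ ℤ^k with Σᵢ δᵢ = b - c and a - |δ| ≥ 0, where |δ| = Σ|δᵢ|. The number of pairs (w⁺, w⁻) ∈ ℕ^k × ℕ^k with Σᵢ wᵢ⁺ = b, Σᵢ wᵢ⁻ = c, wᵢ⁺ - wᵢ⁻ = δᵢ for all i, and min(w₁⁺, w₁⁻) = 0, equals C((a - |δ|)/2 + k - 2, k - 2). -/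
/-- One-row `GL_k` branching count.  Fix `k ≥ 2`, `b, c ∈ ℕ` with `a := b + c`, and
`δ ∈ ℤ^k` with `Σᵢ δᵢ = b - c` and `a - |δ| ≥ 0`, where `|δ| = Σ|δᵢ|`.  The number of pairs
`(w⁺, w⁻) ∈ ℕ^k × ℕ^k` with `Σ wᵢ⁺ = b`, `Σ wᵢ⁻ = c`, `wᵢ⁺ - wᵢ⁻ = δᵢ` for all `i`, and
`min(w₁⁺, w₁⁻) = 0`, equals `C((a - |δ|)/2 + k - 2, k - 2)`. -/
theorem one_row_glk_branching (k b c : ℕ) (hk : 2 ≤ k)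
    (δ : Fin k → ℤ) (hsum : ∑ i, δ i = (b : ℤ) - (c : ℤ))
    (habs : ∑ i, (δ i).natAbs ≤ b + c) :
    Nat.card {p : (Fin k → ℕ) × (Fin k → ℕ) //
      (∑ i, p.1 i = b) ∧ (∑ i, p.2 i = c) ∧
      (∀ i, (p.1 i : ℤ) - (p.2 i : ℤ) = δ i) ∧
      min (p.1 ⟨0, by omega⟩) (p.2 ⟨0, by omega⟩) = 0}
    = ((b + c - ∑ i, (δ i).natAbs) / 2 + k - 2).choose (k - 2) := by
  obtain ⟨n, rfl⟩ : ∃ n, k = n + 2 := ⟨k - 2, by omega⟩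
  have hPM : (∑ i, (δ i).toNat) + (∑ i, (-δ i).toNat) = ∑ i, (δ i).natAbs := by
    rw [← Finset.sum_add_distrib]
    exact Finset.sum_congr rfl fun i _ => by omega
  have hPMz : ((∑ i, (δ i).toNat : ℕ) : ℤ) - ((∑ i, (-δ i).toNat : ℕ) : ℤ)
      = (b : ℤ) - (c : ℤ) := by
    rw [← hsum]
    push_cast
    rw [← Finset.sum_sub_distrib]
    exact Finset.sum_congr rfl fun i _ => by omega
  have hPb : (∑ i, (δ i).toNat) ≤ b := by omega
  have hMc : (∑ i, (-δ i).toNat) ≤ c := by omega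
  set N := b - ∑ i, (δ i).toNat with hN
  have hNeq : (b + c - ∑ i, (δ i).natAbs) / 2 = N := by omega
  have e1 : {p : (Fin (n + 2) → ℕ) × (Fin (n + 2) → ℕ) //
      (∑ i, p.1 i = b) ∧ (∑ i, p.2 i = c) ∧
      (∀ i, (p.1 i : ℤ) - (p.2 i : ℤ) = δ i) ∧
      min (p.1 ⟨0, by omega⟩) (p.2 ⟨0, by omega⟩) = 0} ≃
      {m : Fin (n + 2) → ℕ // (∑ i, m i = N) ∧ m 0 = 0} :=
  { toFun := fun p => ⟨fun i => min (p.1.1 i) (p.1.2 i), by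
      obtain ⟨⟨w1, w2⟩, h1, h2, h3, h4⟩ := p
      dsimp only at h1 h2 h3 h4 ⊢
      have hs : ∑ i, w1 i = (∑ i, min (w1 i) (w2 i)) + ∑ i, (δ i).toNat := by
        rw [← Finset.sum_add_distrib]
        exact Finset.sum_congr rfl fun i _ => by have := h3 i; omega
      omega, by
      obtain ⟨⟨w1, w2⟩, h1, h2, h3, h4⟩ := p
      dsimp only at h4 ⊢
      simp only [Fin.mk_zero] at h4
      exact h4⟩
    invFun := fun m => ⟨(fun i => m.1 i + (δ i).toNat, fun i => m.1 i + (-δ i).toNat), by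
      obtain ⟨mm, hm1, hm2⟩ := m
      dsimp only
      rw [Finset.sum_add_distrib, hm1]
      omega, by
      obtain ⟨mm, hm1, hm2⟩ := m
      dsimp only
      rw [Finset.sum_add_distrib, hm1]
      omega, by
      intro i
      dsimp only
      push_cast
      omega, by
      obtain ⟨mm, hm1, hm2⟩ := m
      dsimp only
      simp only [Fin.mk_zero]
      omega⟩
    left_inv := by
      rintro ⟨⟨w1, w2⟩, h1, h2, h3, h4⟩
      refine Subtype.ext ?_
      dsimp only
      refine Prod.ext ?_ ?_ <;> funext i <;> dsimp only <;>
        · have := h3 i; dsimp only at this; omega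
    right_inv := by
      rintro ⟨mm, hm1, hm2⟩
      refine Subtype.ext (funext fun i => ?_)
      dsimp only
      omega }
  have e2 : {m : Fin (n + 2) → ℕ // (∑ i, m i = N) ∧ m 0 = 0} ≃
      {g : Fin (n + 1) → ℕ // ∑ j, g j = N} :=
  { toFun := fun m => ⟨fun j => m.1 j.succ, by
      obtain ⟨mm, hm1, hm2⟩ := m
      dsimp only
      rw [Fin.sum_univ_succ, hm2, zero_add] at hm1
      exact hm1⟩
    invFun := fun g => ⟨Fin.cons 0 g.1, by
      rw [Fin.sum_univ_succ, Fin.cons_zero, zero_add]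
      refine (Finset.sum_congr rfl fun j _ => ?_).trans g.2
      rw [Fin.cons_succ], by simp⟩
    left_inv := by
      rintro ⟨mm, hm1, hm2⟩
      refine Subtype.ext (funext fun i => ?_)
      dsimp only
      refine Fin.cases ?_ (fun j => ?_) i
      · rw [Fin.cons_zero, hm2]
      · rw [Fin.cons_succ]
    right_inv := by
      rintro ⟨g, hg⟩
      refine Subtype.ext (funext fun j => ?_)
      dsimp only
      rw [Fin.cons_succ] }
  rw [Nat.card_congr (e1.trans e2), Nat.card_congr (Sym.equivNatSumOfFintype (Fin (n + 1)) N).symm,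
    Nat.card_eq_fintype_card, Sym.card_sym_eq_choose, hNeq]
  simp only [Fintype.card_fin]
  have h1 : n + 1 + N - 1 = n + N := by omega
  have h2 : N + (n + 2) - 2 = n + N := by omega
  have h3 : n + 2 - 2 = n := by omega
  rw [h1, h2, h3]
  exact Nat.choose_symm_add.symm
end

section
/- Let 0 ≤ a ≤ k and δ ∈ {0,1}^k with a - |δ| ∈ 2ℕ, where |δ| = Σδᵢ. The number of Sp_{2k}-ballot tableaux of one-column shape (1^a) and weight δ equals ((k-a+1)/(k-|δ|+1)) · C(k-|δ|+1, (a-|δ|)/2). -/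
/-!
Since every `δᵢ` is `0` or `1`, the entry set of such a column is the set of letters `i` with
`δᵢ = 1` together with both `i` and `ī` for `i` in a set `B` of size `m = (a - |δ|)/2`; the ballot
condition is automatic in a strictly increasing column. The symplectic condition at `i` reads
`#{j ≤ i | δⱼ = 1} + 2 #(B ∩ [1, i]) ≤ i`: reading `1, …, k` as a walk with a down-step at each
letter of `B`, a level step at each letter with `δⱼ = 1` and an up-step elsewhere, it says the walk
never goes below zero. The level steps do not matter, so these are ballot sequences with
`N = k - |δ|` steps of which `m` go down, counted by `(N + 1 - 2m) / (N + 1) · C(N + 1, m)`; this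
is proved by induction on `k`, removing the last letter and using Pascal's rule.
-/

open Finset

section Ballot

/-- Read positions `0, …, k - 1` as a walk: positions in `B` are down-steps, positions in `A` are
neutral and all others are up-steps. The condition says that no prefix of the walk goes below
zero. -/
def IsBallot (k : ℕ) (A B : Finset ℕ) : Prop :=
  ∀ j ≤ k, #(A ∩ range j) + 2 * #(B ∩ range j) ≤ j

instance (k : ℕ) (A B : Finset ℕ) : Decidable (IsBallot k A B) := by
  unfold IsBallot; infer_instance

variable {k m : ℕ} {A B : Finset ℕ}

lemma card_inter_range_succ (s : Finset ℕ) (j : ℕ) :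
    #(s ∩ range (j + 1)) = #(s ∩ range j) + if j ∈ s then 1 else 0 := by
  rw [range_add_one]
  split_ifs with h
  · rw [inter_insert_of_mem h, card_insert_of_notMem (by simp)]
  · rw [inter_insert_of_notMem h, add_zero]

lemma isBallot_empty (k : ℕ) (A : Finset ℕ) : IsBallot k A ∅ := fun j _ => by
  simpa using (card_le_card inter_subset_right).trans (card_range j).le

lemma isBallot_succ_iff : IsBallot (k + 1) A B ↔
    IsBallot k A B ∧ #(A ∩ range (k + 1)) + 2 * #(B ∩ range (k + 1)) ≤ k + 1 := by
  simp only [IsBallot, Nat.le_succ_iff, or_imp, forall_and, forall_eq]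

lemma isBallot_succ_iff_of_subset (hB : B ⊆ range k) : IsBallot (k + 1) A B ↔ IsBallot k A B := by
  refine isBallot_succ_iff.trans ⟨And.left, fun h => ⟨h, ?_⟩⟩
  have hk := h k le_rfl
  have hkB : k ∉ B := fun h => by simpa using hB h
  rw [card_inter_range_succ A, card_inter_range_succ B, if_neg hkB]
  split_ifs <;> omega

lemma isBallot_insert_left : IsBallot k (insert k A) B ↔ IsBallot k A B := by
  refine forall₂_congr fun j hj => ?_
  rw [insert_inter_of_notMem (by simpa using hj)]

lemma isBallot_insert_right : IsBallot k A (insert k B) ↔ IsBallot k A B := by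
  refine forall₂_congr fun j hj => ?_
  rw [insert_inter_of_notMem (by simpa using hj)]

def ballotSets (k : ℕ) (A : Finset ℕ) (m : ℕ) : Finset (Finset ℕ) :=
  {B ∈ (range k \ A).powersetCard m | IsBallot k A B}

lemma mem_ballotSets :
    B ∈ ballotSets k A m ↔ B ⊆ range k \ A ∧ #B = m ∧ IsBallot k A B := by
  simp [ballotSets, mem_powersetCard, and_assoc]

lemma ballotSets_zero (k : ℕ) (A : Finset ℕ) : ballotSets k A 0 = {∅} := by
  simp [ballotSets, powersetCard_zero, isBallot_empty]

lemma ballotSets_eq_empty (hA : A ⊆ range k) (h : k < #A + 2 * m) : ballotSets k A m = ∅ := by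
  refine eq_empty_of_forall_notMem fun B hB => ?_
  obtain ⟨hBsub, rfl, hballot⟩ := mem_ballotSets.1 hB
  have := hballot k le_rfl
  rw [inter_eq_left.2 hA, inter_eq_left.2 (hBsub.trans sdiff_subset)] at this
  omega

lemma ballotSets_succ_insert_self :
    ballotSets (k + 1) (insert k A) m = ballotSets k A m := by
  have hrange : range (k + 1) \ insert k A = range k \ A := by
    rw [range_add_one, insert_sdiff_insert, sdiff_insert_of_notMem (by simp)]
  rw [ballotSets, ballotSets, hrange]
  refine filter_congr fun B hB => ?_
  rw [isBallot_succ_iff_of_subset ((mem_powersetCard.1 hB).1.trans sdiff_subset),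
    isBallot_insert_left]

lemma card_ballotSets_succ (hA : A ⊆ range k) (hm : #A + 2 * (m + 1) ≤ k + 1) :
    #(ballotSets (k + 1) A (m + 1)) = #(ballotSets k A (m + 1)) + #(ballotSets k A m) := by
  have hkA : k ∉ A := fun h => by simpa using hA h
  have hk : k ∉ range k \ A := by simp
  have hrange : range (k + 1) \ A = insert k (range k \ A) := by
    rw [range_add_one, insert_sdiff_of_notMem _ hkA]
  rw [ballotSets, hrange, powersetCard_succ_insert hk, filter_union, filter_image,
    card_union_of_disjoint, card_image_of_injOn]
  · congr 1
    · refine congrArg card (filter_congr fun B hB => ?_)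
      exact isBallot_succ_iff_of_subset ((mem_powersetCard.1 hB).1.trans sdiff_subset)
    · refine congrArg card (filter_congr fun C hC => ?_)
      obtain ⟨hCsub, rfl⟩ := mem_powersetCard.1 hC
      have hCk : C ⊆ range k := hCsub.trans sdiff_subset
      rw [isBallot_succ_iff, isBallot_insert_right, card_inter_range_succ, card_inter_range_succ,
        if_neg hkA, if_pos (mem_insert_self k C), insert_inter_of_notMem (by simp),
        inter_eq_left.2 hA, inter_eq_left.2 hCk]
      simp only [and_iff_left_iff_imp]
      omega
  · intro C hC D hD h
    have hkC : k ∉ C := fun h => hk ((mem_powersetCard.1 (mem_filter.1 hC).1).1 h)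
    have hkD : k ∉ D := fun h => hk ((mem_powersetCard.1 (mem_filter.1 hD).1).1 h)
    rw [← erase_insert hkC, ← erase_insert hkD]
    exact congrArg (erase · k) h
  · refine disjoint_left.2 fun B hB hB' => ?_
    obtain ⟨C, -, rfl⟩ := mem_image.1 hB'
    exact hk ((mem_powersetCard.1 (mem_filter.1 hB).1).1 (mem_insert_self k C))

/-- The ballot numbers `(N - 2m) / N · C(N, m)` satisfy Pascal's recurrence. -/
lemma ballot_number_succ {N m x y : ℕ} (hm : 2 * (m + 1) ≤ N)
    (hx : x * N = (N - 2 * (m + 1)) * N.choose (m + 1))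
    (hy : y * N = (N - 2 * m) * N.choose m) :
    (x + y) * (N + 1) = (N + 1 - 2 * (m + 1)) * (N + 1).choose (m + 1) := by
  obtain ⟨d, rfl⟩ := Nat.exists_eq_add_of_le hm
  have hpascal := Nat.choose_succ_right_eq (2 * (m + 1) + d) m
  rw [Nat.choose_succ_succ']
  rw [show 2 * (m + 1) + d - 2 * (m + 1) = d by omega] at hx
  rw [show 2 * (m + 1) + d - 2 * m = d + 2 by omega] at hy
  rw [show 2 * (m + 1) + d - m = m + d + 2 by omega] at hpascal
  rw [show 2 * (m + 1) + d + 1 - 2 * (m + 1) = d + 1 by omega]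
  refine Nat.eq_of_mul_eq_mul_right (show 0 < 2 * (m + 1) + d by omega) ?_
  zify at hx hy hpascal ⊢
  linear_combination (2 * (m + 1) + d + 1 : ℤ) * (hx + hy) - 2 * hpascal

theorem card_ballotSets_mul (hA : A ⊆ range k) (m : ℕ) :
    #(ballotSets k A m) * (k - #A + 1) = (k - #A + 1 - 2 * m) * (k - #A + 1).choose m := by
  induction k generalizing A m with
  | zero =>
    rcases m with _ | m
    · simp [ballotSets_zero]
    · rw [ballotSets_eq_empty hA (by omega), card_empty, zero_mul,
        Nat.sub_eq_zero_of_le (by omega), zero_mul]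
  | succ k ih =>
    rcases m with _ | m
    · simp [ballotSets_zero]
    by_cases hbig : k + 1 < #A + 2 * (m + 1)
    · rw [ballotSets_eq_empty hA hbig, card_empty, zero_mul, Nat.sub_eq_zero_of_le (by omega),
        zero_mul]
    have hA' : A.erase k ⊆ range k := subset_insert_iff.1 (range_add_one ▸ hA)
    by_cases hk : k ∈ A
    · rw [← insert_erase hk, ballotSets_succ_insert_self, card_insert_of_notMem (notMem_erase k A),
        Nat.add_sub_add_right]
      exact ih hA' (m + 1)
    · rw [erase_eq_of_notMem hk] at hA'
      rw [card_ballotSets_succ hA' (by omega), show k + 1 - #A + 1 = k - #A + 1 + 1 by omega]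
      exact ballot_number_succ (by omega) (ih hA' (m + 1)) (ih hA' m)

end Ballot

section Column

/-- In the encoding `i ↦ 2i - 1`, `ī ↦ 2i` of the alphabet, the column containing the letter
`j + 1` for `j ∈ B ∪ A` and its barred partner for `j ∈ B`. -/
def columnOf (A B : Finset ℕ) : Finset ℕ :=
  (B ∪ A).image (2 * · + 1) ∪ B.image (2 * · + 2)

variable {k : ℕ} {A B : Finset ℕ}

lemma odd_mem_columnOf {j : ℕ} : 2 * j + 1 ∈ columnOf A B ↔ j ∈ B ∨ j ∈ A := by
  simp only [columnOf, mem_union, mem_image]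
  constructor
  · rintro (⟨i, hi, hij⟩ | ⟨i, -, hij⟩)
    · obtain rfl : i = j := by omega
      exact hi
    · omega
  · exact fun h => Or.inl ⟨j, h, rfl⟩

lemma even_mem_columnOf {j : ℕ} : 2 * j + 2 ∈ columnOf A B ↔ j ∈ B := by
  simp only [columnOf, mem_union, mem_image]
  constructor
  · rintro (⟨i, -, hij⟩ | ⟨i, hi, hij⟩)
    · omega
    · obtain rfl : i = j := by omega
      exact hi
  · exact fun h => Or.inr ⟨j, h, rfl⟩

lemma columnOf_injective (A : Finset ℕ) : Function.Injective (columnOf A) := fun B B' h =>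
  ext fun j => by rw [← even_mem_columnOf (A := A), h, even_mem_columnOf]

lemma columnOf_subset_Icc (hA : A ⊆ range k) (hB : B ⊆ range k) :
    columnOf A B ⊆ Icc 1 (2 * k) := by
  intro x hx
  simp only [columnOf, mem_union, mem_image] at hx
  rcases hx with ⟨j, hj, rfl⟩ | ⟨j, hj, rfl⟩
  · have := mem_range.1 (hj.elim (hB ·) (hA ·)); simp only [mem_Icc]; omega
  · have := mem_range.1 (hB hj); simp only [mem_Icc]; omega

lemma card_columnOf (h : Disjoint B A) : #(columnOf A B) = 2 * #B + #A := by
  have hodd : Function.Injective (2 * · + 1 : ℕ → ℕ) := fun i j h => by simp only at h; omega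
  have heven : Function.Injective (2 * · + 2 : ℕ → ℕ) := fun i j h => by simp only at h; omega
  rw [columnOf, card_union_of_disjoint, card_image_of_injective _ hodd,
    card_image_of_injective _ heven, card_union_of_disjoint h]
  · ring
  · refine disjoint_left.2 fun x hx hx' => ?_
    obtain ⟨i, -, rfl⟩ := mem_image.1 hx
    obtain ⟨j, -, hj⟩ := mem_image.1 hx'
    omega

lemma filter_columnOf_le (j : ℕ) :
    {x ∈ columnOf A B | x ≤ 2 * j} = columnOf (A ∩ range j) (B ∩ range j) := by
  have hodd (s : Finset ℕ) : {i ∈ s | 2 * i + 1 ≤ 2 * j} = s ∩ range j := by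
    ext i; simp only [mem_filter, mem_inter, mem_range]; exact and_congr_right fun _ => by omega
  have heven (s : Finset ℕ) : {i ∈ s | 2 * i + 2 ≤ 2 * j} = s ∩ range j := by
    ext i; simp only [mem_filter, mem_inter, mem_range]; exact and_congr_right fun _ => by omega
  rw [columnOf, columnOf, filter_union, filter_image, filter_image, hodd, heven,
    union_inter_distrib_right]

lemma isBallot_iff_columnOf (h : Disjoint B A) :
    IsBallot k A B ↔ ∀ i, 1 ≤ i → i ≤ k → #{x ∈ columnOf A B | x ≤ 2 * i} ≤ i := by
  refine forall_congr' fun i => ?_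
  rw [filter_columnOf_le, card_columnOf (h.mono inter_subset_left inter_subset_left)]
  rcases i with _ | i
  · simp
  · simp [add_comm]

end Column

section Weight

variable {k : ℕ} {δ : Fin k → ℕ}

def onesOf (δ : Fin k → ℕ) : Finset ℕ := ({i | δ i = 1} : Finset (Fin k)).map Fin.valEmbedding

lemma val_mem_onesOf {i : Fin k} : (i : ℕ) ∈ onesOf δ ↔ δ i = 1 := by
  simp [onesOf, Fin.val_inj]

lemma onesOf_subset_range : onesOf δ ⊆ range k := by
  intro j hj
  obtain ⟨i, -, rfl⟩ := mem_map.1 hj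
  exact mem_range.2 i.isLt

lemma card_onesOf (hδ : ∀ i, δ i ≤ 1) : #(onesOf δ) = ∑ i, δ i := by
  rw [onesOf, card_map, card_filter]
  refine sum_congr rfl fun i _ => ?_
  have := hδ i
  split_ifs <;> omega

def IsSpColumn (k : ℕ) (δ : Fin k → ℕ) (W : Finset ℕ) : Prop :=
  W ⊆ Icc 1 (2 * k) ∧ (∀ i, 1 ≤ i → i ≤ k → #{x ∈ W | x ≤ 2 * i} ≤ i) ∧
    ∀ i : Fin k,
      (if 2 * (i : ℕ) + 1 ∈ W then 1 else 0) = (if 2 * (i : ℕ) + 2 ∈ W then 1 else 0) + δ i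

lemma isSpColumn_columnOf_iff (hδ : ∀ i, δ i ≤ 1) {B : Finset ℕ} (hB : B ⊆ range k) :
    IsSpColumn k δ (columnOf (onesOf δ) B) ↔
      Disjoint B (onesOf δ) ∧ IsBallot k (onesOf δ) B := by
  have hweight : (∀ i : Fin k, (if 2 * (i : ℕ) + 1 ∈ columnOf (onesOf δ) B then 1 else 0) =
      (if 2 * (i : ℕ) + 2 ∈ columnOf (onesOf δ) B then 1 else 0) + δ i) ↔
      Disjoint B (onesOf δ) := by
    simp only [odd_mem_columnOf, even_mem_columnOf, val_mem_onesOf]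
    refine ⟨fun h => disjoint_left.2 fun j hjB hjA => ?_, fun h i => ?_⟩
    · obtain ⟨i, hi, rfl⟩ := mem_map.1 hjA
      have := h i
      simp_all
    · have hi : (i : ℕ) ∈ B → ¬δ i = 1 := fun hi => by
        rw [← val_mem_onesOf]; exact disjoint_left.1 h hi
      rcases Nat.le_one_iff_eq_zero_or_eq_one.1 (hδ i) with h0 | h1 <;>
        by_cases hiB : (i : ℕ) ∈ B <;> simp_all
  unfold IsSpColumn
  rw [hweight, and_iff_right (columnOf_subset_Icc onesOf_subset_range hB)]
  constructor
  · rintro ⟨hsymp, hdisj⟩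
    exact ⟨hdisj, (isBallot_iff_columnOf hdisj).2 hsymp⟩
  · rintro ⟨hdisj, hballot⟩
    exact ⟨(isBallot_iff_columnOf hdisj).1 hballot, hdisj⟩

lemma eq_columnOf_of_isSpColumn (hδ : ∀ i, δ i ≤ 1) {W : Finset ℕ} (hW : IsSpColumn k δ W) :
    W = columnOf (onesOf δ) {j ∈ range k | 2 * j + 2 ∈ W} := by
  ext x
  by_cases hx : x ∈ Icc 1 (2 * k)
  · rw [mem_Icc] at hx
    obtain ⟨j, hj, rfl | rfl⟩ : ∃ j < k, x = 2 * j + 1 ∨ x = 2 * j + 2 :=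
      ⟨(x - 1) / 2, by omega, by omega⟩
    · have hw := hW.2.2 ⟨j, hj⟩
      have := hδ ⟨j, hj⟩
      rw [odd_mem_columnOf, mem_filter, mem_range, ← Fin.val_mk hj, val_mem_onesOf]
      by_cases h1 : 2 * j + 1 ∈ W <;> by_cases h2 : 2 * j + 2 ∈ W <;>
        simp only [h1, h2, hj, if_true, if_false, and_true, and_false, true_or, false_or,
          true_iff, false_iff] at hw ⊢ <;> omega
    · rw [even_mem_columnOf, mem_filter, mem_range]
      exact (and_iff_right hj).symm
  · exact iff_of_false (fun h => hx (hW.1 h))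
      (fun h => hx (columnOf_subset_Icc onesOf_subset_range (filter_subset _ _) h))

lemma card_eq_and_isSpColumn_iff (hδ : ∀ i, δ i ≤ 1) {a m : ℕ} (ha : a = 2 * m + ∑ i, δ i)
    {W : Finset ℕ} :
    #W = a ∧ IsSpColumn k δ W ↔ W ∈ (ballotSets k (onesOf δ) m).image (columnOf (onesOf δ)) := by
  rw [mem_image]
  constructor
  · rintro ⟨hcard, hW⟩
    obtain ⟨B, hBk, rfl⟩ : ∃ B ⊆ range k, W = columnOf (onesOf δ) B :=
      ⟨_, filter_subset _ _, eq_columnOf_of_isSpColumn hδ hW⟩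
    obtain ⟨hdisj, hballot⟩ := (isSpColumn_columnOf_iff hδ hBk).1 hW
    rw [card_columnOf hdisj, card_onesOf hδ] at hcard
    exact ⟨B, mem_ballotSets.2 ⟨subset_sdiff.2 ⟨hBk, hdisj⟩, by omega, hballot⟩, rfl⟩
  · rintro ⟨B, hB, rfl⟩
    obtain ⟨hBsub, rfl, hballot⟩ := mem_ballotSets.1 hB
    obtain ⟨hBk, hdisj⟩ := subset_sdiff.1 hBsub
    exact ⟨by rw [card_columnOf hdisj, card_onesOf hδ, ha],
      (isSpColumn_columnOf_iff hδ hBk).2 ⟨hdisj, hballot⟩⟩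

end Weight

section Tableau

lemma List.count_take_le_count_take_of_lt {α : Type*} [Preorder α] [DecidableEq α] {L : List α}
    (hL : L.Pairwise (· < ·)) {x y : α} (hyx : y < x) (hmem : x ∈ L → y ∈ L) (p : ℕ) :
    (L.take p).count x ≤ (L.take p).count y := by
  by_cases hx : x ∈ L.take p
  · have hy : y ∈ L.take p := by
      have hsplit := L.take_append_drop p
      rw [← hsplit, List.pairwise_append] at hL
      rcases List.mem_append.1 (hsplit ▸ hmem (List.mem_of_mem_take hx)) with hy | hy
      · exact hy
      · exact absurd (hL.2.2 x hx y hy) (lt_asymm hyx)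
    calc (L.take p).count x ≤ 1 :=
          List.nodup_iff_count_le_one.1 ((hL.sublist (List.take_sublist p L)).imp ne_of_lt) x
      _ ≤ (L.take p).count y := List.count_pos_iff.2 hy
  · simp [List.count_eq_zero.2 hx]

variable {α : Type*} [DecidableEq α] {a : ℕ} {w : Fin a → α}

lemma count_ofFn_of_injective (hw : Function.Injective w) (x : α) :
    (List.ofFn w).count x = if x ∈ univ.image w then 1 else 0 := by
  rw [(List.nodup_ofFn.2 hw).count]
  simp [List.mem_ofFn]

lemma countP_ofFn_of_injective (hw : Function.Injective w) (p : α → Bool) :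
    (List.ofFn w).countP p = #{x ∈ univ.image w | p x} := by
  rw [List.countP_eq_length_filter, ← List.toFinset_card_of_nodup ((List.nodup_ofFn.2 hw).filter p),
    List.toFinset_filter]
  congr 1
  ext x
  simp [List.mem_ofFn]

lemma card_strictMono_and_image {β : Type*} [LinearOrder β] (a : ℕ) (P : Finset β → Prop) :
    Nat.card {w : Fin a → β // StrictMono w ∧ P (univ.image w)} =
      Nat.card {W : Finset β // #W = a ∧ P W} :=
  Nat.card_congr
    { toFun w := ⟨univ.image w.1,
        by rw [card_image_of_injective _ w.2.1.injective, card_fin], w.2.2⟩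
      invFun W := ⟨W.1.orderEmbOfFin W.2.1, (W.1.orderEmbOfFin W.2.1).strictMono,
        by rw [image_orderEmbOfFin_univ]; exact W.2.2⟩
      left_inv w := Subtype.ext
        (orderEmbOfFin_unique _ (fun t => mem_image_of_mem _ (mem_univ t)) w.2.1).symm
      right_inv W := Subtype.ext (image_orderEmbOfFin_univ _ _) }

end Tableau

section SpBallotTableau

variable {k a : ℕ} {δ : Fin k → ℕ}

/-- A one-column `Sp_{2k}`-ballot tableau of weight `δ`, with the alphabet `1 < 1̄ < ⋯ < k < k̄`
encoded as `1 < 2 < ⋯ < 2k` via `i ↦ 2i - 1`, `ī ↦ 2i`. -/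
def IsSpBallotTableau (k : ℕ) (δ : Fin k → ℕ) {a : ℕ} (w : Fin a → ℕ) : Prop :=
  StrictMono w ∧
  (∀ t, 1 ≤ w t ∧ w t ≤ 2 * k) ∧
  (∀ i, 1 ≤ i → i ≤ k →
    ((List.ofFn w).countP (fun x => decide (x ≤ 2 * i))) ≤ i) ∧
  (∀ i p, 1 ≤ i → i ≤ k →
    (((List.ofFn w).take p).count (2 * i)) ≤ (((List.ofFn w).take p).count (2 * i - 1))) ∧
  (∀ i : Fin k,
    (List.ofFn w).count (2 * (i : ℕ) + 1) =
      (List.ofFn w).count (2 * (i : ℕ) + 2) + δ i)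

/-- The ballot condition is automatic: `ī` occurs only together with `i`, which precedes it. -/
lemma isSpBallotTableau_iff {w : Fin a → ℕ} :
    IsSpBallotTableau k δ w ↔ StrictMono w ∧ IsSpColumn k δ (univ.image w) := by
  unfold IsSpBallotTableau IsSpColumn
  refine and_congr_right fun hw => ?_
  simp only [count_ofFn_of_injective hw.injective, countP_ofFn_of_injective hw.injective,
    decide_eq_true_eq, image_subset_iff, mem_univ, mem_Icc, forall_const]
  refine ⟨fun ⟨hrange, hsymp, _, hweight⟩ => ⟨hrange, hsymp, hweight⟩,
    fun ⟨hrange, hsymp, hweight⟩ => ⟨hrange, hsymp, fun i p hi hik => ?_, hweight⟩⟩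
  have hsorted : (List.ofFn w).Pairwise (· < ·) := List.pairwise_ofFn.2 fun _ _ h => hw h
  refine List.count_take_le_count_take_of_lt hsorted (by omega) (fun h => ?_) p
  have hweight_i := hweight ⟨i - 1, by omega⟩
  simp only [show 2 * (i - 1) + 1 = 2 * i - 1 by omega, show 2 * (i - 1) + 2 = 2 * i by omega,
    if_pos (show 2 * i ∈ univ.image w by simpa [List.mem_ofFn] using h)] at hweight_i
  split_ifs at hweight_i with h'
  · simpa [List.mem_ofFn] using h'
  · omega

theorem card_isSpBallotTableau (hδ : ∀ i, δ i ≤ 1) {m : ℕ} (ha : a = 2 * m + ∑ i, δ i) :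
    Nat.card {w : Fin a → ℕ // IsSpBallotTableau k δ w} = #(ballotSets k (onesOf δ) m) :=
  calc Nat.card {w : Fin a → ℕ // IsSpBallotTableau k δ w}
      = Nat.card {w : Fin a → ℕ // StrictMono w ∧ IsSpColumn k δ (univ.image w)} :=
        Nat.card_congr (Equiv.subtypeEquivRight fun _ => isSpBallotTableau_iff)
    _ = Nat.card {W : Finset ℕ // #W = a ∧ IsSpColumn k δ W} := card_strictMono_and_image _ _
    _ = Nat.card ((ballotSets k (onesOf δ) m).image (columnOf (onesOf δ))) :=
        Nat.card_congr (Equiv.subtypeEquivRight fun _ => card_eq_and_isSpColumn_iff hδ ha)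
    _ = #(ballotSets k (onesOf δ) m) := by
        rw [Nat.card_eq_finsetCard, card_image_of_injective _ (columnOf_injective _)]

end SpBallotTableau

/-- One-column `Sp_{2k}` branching count.  The alphabet `1 < 1̄ < ⋯ < k < k̄` is encoded by
`1 < 2 < ⋯ < 2k` with `i ↦ 2i - 1`, `ī ↦ 2i`.  A one-column `Sp_{2k}`-ballot tableau of shape
`(1^a)` is a strictly increasing sequence `w` of length `a` over this alphabet such that for
each `i` at most `i` entries are `≤ ī = 2i` (symplectic condition), and reading from top to
bottom the number of `ī`'s never exceeds the number of `i`'s (ballot condition).  Its weight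
`δᵢ = #(i's) − #(ī's) ∈ {0,1}`.  For `0 ≤ a ≤ k` and `δ ∈ {0,1}^k` with `a - |δ| ∈ 2ℕ`
(`|δ| = Σ δᵢ`), the number of such tableaux of weight `δ` equals
`((k-a+1)/(k-|δ|+1)) · C(k-|δ|+1, (a-|δ|)/2)` (stated in denominator-cleared form). -/
theorem one_column_spk_branching (k a : ℕ) (ha : a ≤ k)
    (δ : Fin k → ℕ) (hδ : ∀ i, δ i ≤ 1)
    (hle : ∑ i, δ i ≤ a) (heven : 2 ∣ (a - ∑ i, δ i)) :
    Nat.card {w : Fin a → ℕ //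
      StrictMono w ∧
      (∀ t, 1 ≤ w t ∧ w t ≤ 2 * k) ∧
      (∀ i, 1 ≤ i → i ≤ k →
        ((List.ofFn w).countP (fun x => decide (x ≤ 2 * i))) ≤ i) ∧
      (∀ i p, 1 ≤ i → i ≤ k →
        (((List.ofFn w).take p).count (2 * i)) ≤ (((List.ofFn w).take p).count (2 * i - 1))) ∧
      (∀ i : Fin k,
        (List.ofFn w).count (2 * (i : ℕ) + 1) =
          (List.ofFn w).count (2 * (i : ℕ) + 2) + δ i)}
    * (k - ∑ i, δ i + 1)
    = (k - a + 1) * (k - ∑ i, δ i + 1).choose ((a - ∑ i, δ i) / 2) := by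
  change Nat.card {w : Fin a → ℕ // IsSpBallotTableau k δ w} * _ = _
  obtain ⟨m, hm⟩ := heven
  rw [card_isSpBallotTableau hδ (m := m) (by omega)]
  rw [← card_onesOf hδ] at hle hm ⊢
  have hA : #(onesOf δ) ≤ k := by simpa using card_le_card (onesOf_subset_range (δ := δ))
  rw [card_ballotSets_mul onesOf_subset_range, show (a - #(onesOf δ)) / 2 = m by omega,
    show k - #(onesOf δ) + 1 - 2 * m = k - a + 1 by omega]
end
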